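/- arXiv:1708.06671 — 2 statements merged into one kernel-verified Lean document; each statement's English description precedes it below -/
import Mathlib

section
/- Let τ ∈ ℝ, let Ω ⊆ ℝ² be open, and let v : Ω → ℝ be a C² function with v_x² + v_y² < 1 on Ω; set ω̃ = (1 − v_x² − v_y²)^(1/2). Then at every point of Ω the cross-partial identity ∂_y(v_y/ω̃ − τy) = ∂_x(−v_x/ω̃ + τx) holds if and only if the spacelike constant-mean-curvature-τ equation (1−v_y²)v_xx + 2 v_x v_y v_xy + (1−v_x²)v_yy = 2τ ω̃³ holds at that point. (Hence on a simply connected domain, this PDE for v is exactly the integrability condition for the existence of a dual function u with u_x = v_y/ω̃ − τy and u_y = −v_x/ω̃ + τx.) -/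
/-- Partial derivative in the `x` direction. -/
noncomputable def px (f : ℝ × ℝ → ℝ) (p : ℝ × ℝ) : ℝ := fderiv ℝ f p (1, 0)

/-- Partial derivative in the `y` direction. -/
noncomputable def py (f : ℝ × ℝ → ℝ) (p : ℝ × ℝ) : ℝ := fderiv ℝ f p (0, 1)

/-- Lorentzian area element `ω̃ = (1 − v_x² − v_y²)^(1/2)` of the graph of `v`. -/
noncomputable def omegT (v : ℝ × ℝ → ℝ) (p : ℝ × ℝ) : ℝ :=
  Real.sqrt (1 - (px v p) ^ 2 - (py v p) ^ 2)

/-! With `a = v_x`, `b = v_y` and `ω̃² = 1 - a² - b²`, the quotient rule gives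
`∂(f / ω̃) = (ω̃² ∂f + f (a ∂a + b ∂b)) / ω̃³`. Since `a_y = b_x` (Schwarz),
`∂_y(b / ω̃) + ∂_x(a / ω̃) = ((1 - b²) a_x + 2ab a_y + (1 - a²) b_y) / ω̃³`,
and the cross-partial identity says exactly that this sum is `2τ`. -/

section SecondDerivative

variable {E F : Type*} [NormedAddCommGroup E] [NormedSpace ℝ E]
  [NormedAddCommGroup F] [NormedSpace ℝ F] {v : E → F} {p : E}

theorem ContDiffAt.differentiableAt_fderiv_apply (hv : ContDiffAt ℝ 2 v p) (w : E) :
    DifferentiableAt ℝ (fun q => fderiv ℝ v q w) p :=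
  ((hv.fderiv_right one_add_one_eq_two.le).differentiableAt one_ne_zero).clm_apply
    (differentiableAt_const w)

theorem ContDiffAt.fderiv_fderiv_apply_comm (hv : ContDiffAt ℝ 2 v p) (u w : E) :
    fderiv ℝ (fun q => fderiv ℝ v q w) p u = fderiv ℝ (fun q => fderiv ℝ v q u) p w := by
  have hv' := (hv.fderiv_right one_add_one_eq_two.le).differentiableAt one_ne_zero
  rw [fderiv_clm_apply hv' (differentiableAt_const w),
    fderiv_clm_apply hv' (differentiableAt_const u)]
  simpa using hv.isSymmSndFDerivAt (by simp) u w

end SecondDerivative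

theorem hasFDerivAt_div_sqrt_one_sub_sq_sub_sq {E : Type*} [NormedAddCommGroup E]
    [NormedSpace ℝ E] {f a b : E → ℝ} {f' a' b' : E →L[ℝ] ℝ} {p : E}
    (hf : HasFDerivAt f f' p) (ha : HasFDerivAt a a' p) (hb : HasFDerivAt b b' p)
    (h : a p ^ 2 + b p ^ 2 < 1) :
    HasFDerivAt (fun q => f q / √(1 - a q ^ 2 - b q ^ 2))
      ((√(1 - a p ^ 2 - b p ^ 2) ^ 3)⁻¹ •
        ((1 - a p ^ 2 - b p ^ 2) • f' + f p • (a p • a' + b p • b'))) p := by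
  have hpos : 0 < 1 - a p ^ 2 - b p ^ 2 := by linarith
  have hω : 0 < √(1 - a p ^ 2 - b p ^ 2) := Real.sqrt_pos.2 hpos
  have hsqrt := (((hasFDerivAt_const 1 p).fun_sub (ha.pow 2)).fun_sub (hb.pow 2)).sqrt hpos.ne'
  refine (hf.fun_mul ((hasDerivAt_inv hω.ne').comp_hasFDerivAt p hsqrt)).congr_fderiv ?_
  ext w
  simp only [one_div, mul_inv_rev, Nat.add_one_sub_one, pow_one, nsmul_eq_mul, Nat.cast_ofNat,
    zero_sub, neg_smul, smul_neg, Function.comp_apply, add_apply, neg_apply, smul_apply, sub_apply,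
    smul_eq_mul, smul_add]
  field_simp
  rw [Real.sq_sqrt hpos.le]
  ring

theorem cross_partials_eq_iff_cmc_eq {a b A B C τ ω : ℝ} (hω : ω ≠ 0) :
    ((1 - a ^ 2 - b ^ 2) * C + b * (a * B + b * C)) / ω ^ 3 - τ
        = -((1 - a ^ 2 - b ^ 2) * A + a * (a * A + b * B)) / ω ^ 3 + τ ↔
      (1 - b ^ 2) * A + 2 * a * b * B + (1 - a ^ 2) * C = 2 * τ * ω ^ 3 := by
  rw [div_sub' (pow_ne_zero 3 hω), div_add' _ _ _ (pow_ne_zero 3 hω),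
    div_left_inj' (pow_ne_zero 3 hω)]
  constructor <;> intro h <;> linear_combination h

section TwinRelations

variable {v : ℝ × ℝ → ℝ} {p : ℝ × ℝ}

theorem ContDiffAt.differentiableAt_px (hv : ContDiffAt ℝ 2 v p) :
    DifferentiableAt ℝ (px v) p :=
  hv.differentiableAt_fderiv_apply _

theorem ContDiffAt.differentiableAt_py (hv : ContDiffAt ℝ 2 v p) :
    DifferentiableAt ℝ (py v) p :=
  hv.differentiableAt_fderiv_apply _

theorem ContDiffAt.px_py_eq_py_px (hv : ContDiffAt ℝ 2 v p) : px (py v) p = py (px v) p :=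
  hv.fderiv_fderiv_apply_comm _ _

theorem omegT_pos (h : px v p ^ 2 + py v p ^ 2 < 1) : 0 < omegT v p :=
  Real.sqrt_pos.2 (by linarith)

theorem py_div_omegT_sub (τ : ℝ) (hv : ContDiffAt ℝ 2 v p)
    (h : px v p ^ 2 + py v p ^ 2 < 1) :
    py (fun q => py v q / omegT v q - τ * q.2) p =
      ((1 - px v p ^ 2 - py v p ^ 2) * py (py v) p
        + py v p * (px v p * py (px v) p + py v p * py (py v) p)) / omegT v p ^ 3 - τ := by
  have hx := hv.differentiableAt_px.hasFDerivAt
  have hy := hv.differentiableAt_py.hasFDerivAt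
  unfold omegT
  rw [py, ((hasFDerivAt_div_sqrt_one_sub_sq_sub_sq hy hx hy h).fun_sub
    (hasFDerivAt_snd.const_mul τ)).fderiv]
  simp only [px, py, smul_add, sub_apply, add_apply, smul_apply, smul_eq_mul,
    ContinuousLinearMap.coe_snd', mul_one, sub_left_inj]
  ring

theorem px_neg_div_omegT_add (τ : ℝ) (hv : ContDiffAt ℝ 2 v p)
    (h : px v p ^ 2 + py v p ^ 2 < 1) :
    px (fun q => -px v q / omegT v q + τ * q.1) p =
      -((1 - px v p ^ 2 - py v p ^ 2) * px (px v) p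
        + px v p * (px v p * px (px v) p + py v p * px (py v) p)) / omegT v p ^ 3 + τ := by
  have hx := hv.differentiableAt_px.hasFDerivAt
  have hy := hv.differentiableAt_py.hasFDerivAt
  unfold omegT
  rw [px, ((hasFDerivAt_div_sqrt_one_sub_sq_sub_sq hx.fun_neg hx hy h).fun_add
    (hasFDerivAt_fst.const_mul τ)).fderiv]
  simp only [px, py, smul_neg, smul_add, neg_smul, add_apply, neg_apply, smul_apply, smul_eq_mul,
    ContinuousLinearMap.coe_fst', mul_one, neg_add_rev, add_left_inj]
  ring

end TwinRelations

/-- for a spacelike `C²` function `v`, the cross-partial identity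
`∂_y(v_y/ω̃ − τy) = ∂_x(−v_x/ω̃ + τx)` holds at a point of `Ω` iff the spacelike
CMC-`τ` equation holds there; i.e. the CMC-`τ` equation is the integrability
condition for the twin relations. -/
theorem cmc_eq_is_integrability_condition (τ : ℝ) (Ω : Set (ℝ × ℝ)) (hΩ : IsOpen Ω)
    (v : ℝ × ℝ → ℝ) (hv : ContDiffOn ℝ 2 v Ω)
    (hsp : ∀ p ∈ Ω, (px v p) ^ 2 + (py v p) ^ 2 < 1) :
    ∀ p ∈ Ω,
      (py (fun q => py v q / omegT v q - τ * q.2) p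
          = px (fun q => -px v q / omegT v q + τ * q.1) p) ↔
      ((1 - (py v p) ^ 2) * px (px v) p
          + 2 * px v p * py v p * py (px v) p
          + (1 - (px v p) ^ 2) * py (py v) p = 2 * τ * (omegT v p) ^ 3) := by
  intro p hp
  have hv₂ : ContDiffAt ℝ 2 v p := hv.contDiffAt (hΩ.mem_nhds hp)
  rw [py_div_omegT_sub τ hv₂ (hsp p hp), px_neg_div_omegT_add τ hv₂ (hsp p hp),
    hv₂.px_py_eq_py_px]
  exact cross_partials_eq_iff_cmc_eq (omegT_pos (hsp p hp)).ne'
end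

section
/- Let τ ∈ ℝ, let Ω ⊆ ℝ² be open, and let u, v : Ω → ℝ be smooth functions with v_x² + v_y² < 1 satisfying the twin relations u_x = v_y/ω̃ − τy and u_y = −v_x/ω̃ + τx on Ω, where ω̃ = (1 − v_x² − v_y²)^(1/2). With α = u_x + τy, β = u_y − τx, ω = (1 + α² + β²)^(1/2), ν = 1/ω, K = [(u_xx + 2ταβ)(u_yy − 2ταβ) − (u_xy + τ(β²−α²))²]/ω⁴ + τ² − 4τ²ν², K̃ = (v_xy² − v_xx v_yy)/ω̃⁴, and ‖∇ν‖² = [(1+β²)(∂_x ν)² − 2αβ (∂_x ν)(∂_y ν) + (1+α²)(∂_y ν)²]/ω², the identity K̃ = −K/ν² − 4τ² + ‖∇ν‖²/ν⁴ holds on Ω. -/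
/-- `α = u_x + τ y`. -/
noncomputable def alph (τ : ℝ) (u : ℝ × ℝ → ℝ) (p : ℝ × ℝ) : ℝ := px u p + τ * p.2

/-- `β = u_y − τ x`. -/
noncomputable def bet (τ : ℝ) (u : ℝ × ℝ → ℝ) (p : ℝ × ℝ) : ℝ := py u p - τ * p.1

/-- Riemannian area element `ω = (1 + α² + β²)^(1/2)` of the graph of `u`. -/
noncomputable def omeg (τ : ℝ) (u : ℝ × ℝ → ℝ) (p : ℝ × ℝ) : ℝ :=
  Real.sqrt (1 + (alph τ u p) ^ 2 + (bet τ u p) ^ 2)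

/-- Angle function `ν = 1/ω` of the graph of `u`, as a function on `ℝ²`. -/
noncomputable def nuF (τ : ℝ) (u : ℝ × ℝ → ℝ) : ℝ × ℝ → ℝ := fun q => 1 / omeg τ u q

/-- Gauss curvature of the minimal graph of `u` in `Nil₃(τ)`, via the Gauss
equation `K = det A + τ² − 4τ²ν²` in coordinates. -/
noncomputable def gaussK (τ : ℝ) (u : ℝ × ℝ → ℝ) (p : ℝ × ℝ) : ℝ :=
  ((px (px u) p + 2 * τ * alph τ u p * bet τ u p) *
      (py (py u) p - 2 * τ * alph τ u p * bet τ u p) -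
    (py (px u) p + τ * ((bet τ u p) ^ 2 - (alph τ u p) ^ 2)) ^ 2) / (omeg τ u p) ^ 4
    + τ ^ 2 - 4 * τ ^ 2 * (nuF τ u p) ^ 2

/-- Gauss curvature `K̃ = (v_xy² − v_xx v_yy)/ω̃⁴` of the spacelike graph of `v`. -/
noncomputable def gaussKT (v : ℝ × ℝ → ℝ) (p : ℝ × ℝ) : ℝ :=
  ((py (px v) p) ^ 2 - px (px v) p * py (py v) p) / (omegT v p) ^ 4

/-- Squared norm of the intrinsic gradient of the angle function `ν` with
respect to the induced metric `[[1+α², αβ],[αβ, 1+β²]]` of the graph of `u`. -/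
noncomputable def gradNuSq (τ : ℝ) (u : ℝ × ℝ → ℝ) (p : ℝ × ℝ) : ℝ :=
  ((1 + (bet τ u p) ^ 2) * (px (nuF τ u) p) ^ 2
      - 2 * alph τ u p * bet τ u p * px (nuF τ u) p * py (nuF τ u) p
      + (1 + (alph τ u p) ^ 2) * (py (nuF τ u) p) ^ 2) / (omeg τ u p) ^ 2

set_option maxHeartbeats 1000000

lemma hasFDerivAt_pd {f : ℝ × ℝ → ℝ} {p : ℝ × ℝ} (hf : ContDiffAt ℝ (⊤ : ℕ∞) f p) (e : ℝ × ℝ) :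
    HasFDerivAt (fun q => fderiv ℝ f q e)
      ((ContinuousLinearMap.apply ℝ ℝ e).comp (fderiv ℝ (fderiv ℝ f) p)) p := by
  have h1 : ContDiffAt ℝ (⊤ : ℕ∞) (fderiv ℝ f) p := hf.fderiv_right (by simp)
  have h2 : HasFDerivAt (fderiv ℝ f) (fderiv ℝ (fderiv ℝ f) p) p :=
    (h1.differentiableAt (by simp)).hasFDerivAt
  exact (ContinuousLinearMap.apply ℝ ℝ e).hasFDerivAt.comp p h2

lemma hasFDerivAt_px {f : ℝ × ℝ → ℝ} {p : ℝ × ℝ} (hf : ContDiffAt ℝ (⊤ : ℕ∞) f p) :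
    HasFDerivAt (px f)
      ((ContinuousLinearMap.apply ℝ ℝ (1,0)).comp (fderiv ℝ (fderiv ℝ f) p)) p :=
  hasFDerivAt_pd hf (1,0)

lemma hasFDerivAt_py {f : ℝ × ℝ → ℝ} {p : ℝ × ℝ} (hf : ContDiffAt ℝ (⊤ : ℕ∞) f p) :
    HasFDerivAt (py f)
      ((ContinuousLinearMap.apply ℝ ℝ (0,1)).comp (fderiv ℝ (fderiv ℝ f) p)) p :=
  hasFDerivAt_pd hf (0,1)

lemma symm_pd {f : ℝ × ℝ → ℝ} {p : ℝ × ℝ} (hf : ContDiffAt ℝ (⊤ : ℕ∞) f p) :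
    px (py f) p = py (px f) p := by
  have hs := hf.isSymmSndFDerivAt (by rw [minSmoothness_of_isRCLikeNormedField]; exact WithTop.coe_le_coe.mpr le_top)
  have h1 : px (py f) p = fderiv ℝ (fderiv ℝ f) p (1,0) (0,1) := by
    rw [px, (hasFDerivAt_py hf).fderiv]; rfl
  have h2 : py (px f) p = fderiv ℝ (fderiv ℝ f) p (0,1) (1,0) := by
    rw [py, (hasFDerivAt_px hf).fderiv]; rfl
  rw [h1, h2, hs]

/-- for dual graphs, the Gauss curvature `K̃` of the Lorentzian
graph satisfies `K̃ = −K/ν² − 4τ² + ‖∇ν‖²/ν⁴`, where `K` and `ν` are the Gauss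
curvature and the angle function of the minimal graph in `Nil₃(τ)`. -/
theorem dual_gauss_curvature_identity (τ : ℝ) (Ω : Set (ℝ × ℝ)) (hΩ : IsOpen Ω)
    (u v : ℝ × ℝ → ℝ)
    (hu : ContDiffOn ℝ (⊤ : ℕ∞) u Ω) (hv : ContDiffOn ℝ (⊤ : ℕ∞) v Ω)
    (hsp : ∀ p ∈ Ω, (px v p) ^ 2 + (py v p) ^ 2 < 1)
    (htwinx : ∀ p ∈ Ω, px u p = py v p / omegT v p - τ * p.2)
    (htwiny : ∀ p ∈ Ω, py u p = -px v p / omegT v p + τ * p.1) :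
    ∀ p ∈ Ω,
      gaussKT v p = -gaussK τ u p / (nuF τ u p) ^ 2 - 4 * τ ^ 2
        + gradNuSq τ u p / (nuF τ u p) ^ 4 := by
  intro p hp
  have hmem : Ω ∈ nhds p := hΩ.mem_nhds hp
  have hvp : ContDiffAt ℝ (⊤ : ℕ∞) v p := hv.contDiffAt hmem
  have hup : ContDiffAt ℝ (⊤ : ℕ∞) u p := hu.contDiffAt hmem
  set a := px v p with ha
  set b := py v p with hb
  set D2 := fderiv ℝ (fderiv ℝ v) p with hD2
  set A := D2 (1,0) (1,0) with hA
  set B := D2 (0,1) (1,0) with hB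
  set C := D2 (0,1) (0,1) with hC
  set w := omegT v p with hwdef
  have hpos : (0:ℝ) < 1 - a ^ 2 - b ^ 2 := by have := hsp p hp; linarith
  have hwpos : 0 < w := Real.sqrt_pos.mpr hpos
  have hwne : w ≠ 0 := ne_of_gt hwpos
  have hw2 : w ^ 2 = 1 - a ^ 2 - b ^ 2 := Real.sq_sqrt hpos.le
  have hsymm : D2 (1,0) (0,1) = B := by
    have hs := hvp.isSymmSndFDerivAt (by rw [minSmoothness_of_isRCLikeNormedField]; exact WithTop.coe_le_coe.mpr le_top)
    exact hs (1,0) (0,1)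
  -- values of second derivatives of v
  have hvxx : px (px v) p = A := by rw [px, (hasFDerivAt_px hvp).fderiv]; rfl
  have hvxy : py (px v) p = B := by rw [py, (hasFDerivAt_px hvp).fderiv]; rfl
  have hvyy : py (py v) p = C := by rw [py, (hasFDerivAt_py hvp).fderiv]; rfl
  -- derivative machinery for v-side functions
  have hx := hasFDerivAt_px hvp
  have hy := hasFDerivAt_py hvp
  have hg : HasFDerivAt (fun q => 1 - px v q ^ 2 - py v q ^ 2)
      ((0 : ℝ × ℝ →L[ℝ] ℝ)
        - (2 * a) • ((ContinuousLinearMap.apply ℝ ℝ (1,0)).comp D2)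
        - (2 * b) • ((ContinuousLinearMap.apply ℝ ℝ (0,1)).comp D2)) p := by
    have h := ((hasFDerivAt_const (1:ℝ) p).sub (hx.mul hx)).sub (hy.mul hy)
    simp only [← pow_two] at h
    refine h.congr_fderiv ?_
    ext x <;> simp [← hD2, ← ha, ← hb] <;> ring
  have hsq : HasDerivAt Real.sqrt (1 / (2 * Real.sqrt (1 - px v p ^ 2 - py v p ^ 2)))
      (1 - px v p ^ 2 - py v p ^ 2) := Real.hasDerivAt_sqrt (by rw [← ha, ← hb]; exact ne_of_gt hpos)
  have hw : HasFDerivAt (omegT v)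
      ((1 / (2 * Real.sqrt (1 - px v p ^ 2 - py v p ^ 2))) •
        ((0 : ℝ × ℝ →L[ℝ] ℝ)
          - (2 * a) • ((ContinuousLinearMap.apply ℝ ℝ (1,0)).comp D2)
          - (2 * b) • ((ContinuousLinearMap.apply ℝ ℝ (0,1)).comp D2))) p :=
    hsq.comp_hasFDerivAt p hg
  have hsqrt_eq : Real.sqrt (1 - px v p ^ 2 - py v p ^ 2) = w := rfl
  -- the twin right-hand sides
  have hinv : HasFDerivAt (fun q => (omegT v q)⁻¹)
      ((-(w ^ 2)⁻¹) • ((1 / (2 * Real.sqrt (1 - px v p ^ 2 - py v p ^ 2))) •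
        ((0 : ℝ × ℝ →L[ℝ] ℝ)
          - (2 * a) • ((ContinuousLinearMap.apply ℝ ℝ (1,0)).comp D2)
          - (2 * b) • ((ContinuousLinearMap.apply ℝ ℝ (0,1)).comp D2)))) p :=
    (hasDerivAt_inv hwne).comp_hasFDerivAt p hw
  have hsnd : HasFDerivAt (fun q : ℝ × ℝ => q.2) (ContinuousLinearMap.snd ℝ ℝ ℝ) p :=
    hasFDerivAt_snd
  have hfst : HasFDerivAt (fun q : ℝ × ℝ => q.1) (ContinuousLinearMap.fst ℝ ℝ ℝ) p :=
    hasFDerivAt_fst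
  have hF1 : HasFDerivAt (fun q => py v q * (omegT v q)⁻¹ - τ * q.2) _ p := (hy.mul hinv).sub (hsnd.const_mul τ)
  have hF2 : HasFDerivAt (fun q => -(px v q * (omegT v q)⁻¹) + τ * q.1) _ p := ((hx.mul hinv).neg).add (hfst.const_mul τ)
  have hequx : px u =ᶠ[nhds p] (fun q => py v q * (omegT v q)⁻¹ - τ * q.2) := by
    filter_upwards [hmem] with q hq
    rw [htwinx q hq, div_eq_mul_inv]
  have hequy : py u =ᶠ[nhds p] (fun q => -(px v q * (omegT v q)⁻¹) + τ * q.1) := by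
    filter_upwards [hmem] with q hq
    rw [htwiny q hq, neg_div, div_eq_mul_inv]
  have hdx : fderiv ℝ (px u) p = fderiv ℝ (fun q => py v q * (omegT v q)⁻¹ - τ * q.2) p :=
    hequx.fderiv_eq
  have hdy : fderiv ℝ (py u) p = fderiv ℝ (fun q => -(px v q * (omegT v q)⁻¹) + τ * q.1) p :=
    hequy.fderiv_eq
  have huxx : px (px u) p = B / w + b * (a * A + b * B) / w ^ 3 := by
    rw [px, hdx, hF1.fderiv]
    simp only [ContinuousLinearMap.sub_apply, ContinuousLinearMap.add_apply,
      ContinuousLinearMap.smul_apply, ContinuousLinearMap.comp_apply,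
      ContinuousLinearMap.apply_apply, ContinuousLinearMap.zero_apply,
      ContinuousLinearMap.neg_apply, ContinuousLinearMap.coe_smul', Pi.smul_apply,
      ContinuousLinearMap.coe_snd', ContinuousLinearMap.coe_fst', smul_eq_mul,
      hsqrt_eq, hsymm]
    simp only [← ha, ← hb, ← hwdef, ← hD2, hsymm, ← hA, ← hB, ← hC]
    field_simp
    ring
  have huxy : py (px u) p = C / w + b * (a * B + b * C) / w ^ 3 - τ := by
    rw [py, hdx, hF1.fderiv]
    simp only [ContinuousLinearMap.sub_apply, ContinuousLinearMap.add_apply,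
      ContinuousLinearMap.smul_apply, ContinuousLinearMap.comp_apply,
      ContinuousLinearMap.apply_apply, ContinuousLinearMap.zero_apply,
      ContinuousLinearMap.neg_apply, ContinuousLinearMap.coe_smul', Pi.smul_apply,
      ContinuousLinearMap.coe_snd', ContinuousLinearMap.coe_fst', smul_eq_mul,
      hsqrt_eq, hsymm]
    simp only [← ha, ← hb, ← hwdef, ← hD2, hsymm, ← hA, ← hB, ← hC]
    field_simp
    ring
  have huyx : px (py u) p = -A / w - a * (a * A + b * B) / w ^ 3 + τ := by
    rw [px, hdy, hF2.fderiv]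
    simp only [ContinuousLinearMap.sub_apply, ContinuousLinearMap.add_apply,
      ContinuousLinearMap.smul_apply, ContinuousLinearMap.comp_apply,
      ContinuousLinearMap.apply_apply, ContinuousLinearMap.zero_apply,
      ContinuousLinearMap.neg_apply, ContinuousLinearMap.coe_smul', Pi.smul_apply,
      ContinuousLinearMap.coe_snd', ContinuousLinearMap.coe_fst', smul_eq_mul,
      hsqrt_eq, hsymm]
    simp only [← ha, ← hb, ← hwdef, ← hD2, hsymm, ← hA, ← hB, ← hC]
    field_simp
    ring
  have huyy : py (py u) p = -B / w - a * (a * B + b * C) / w ^ 3 := by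
    rw [py, hdy, hF2.fderiv]
    simp only [ContinuousLinearMap.sub_apply, ContinuousLinearMap.add_apply,
      ContinuousLinearMap.smul_apply, ContinuousLinearMap.comp_apply,
      ContinuousLinearMap.apply_apply, ContinuousLinearMap.zero_apply,
      ContinuousLinearMap.neg_apply, ContinuousLinearMap.coe_smul', Pi.smul_apply,
      ContinuousLinearMap.coe_snd', ContinuousLinearMap.coe_fst', smul_eq_mul,
      hsqrt_eq, hsymm]
    simp only [← ha, ← hb, ← hwdef, ← hD2, hsymm, ← hA, ← hB, ← hC]
    field_simp
    ring
  -- pointwise values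
  have hal : alph τ u p = b / w := by
    rw [alph, htwinx p hp, ← hb, ← hwdef]; ring
  have hbe : bet τ u p = -a / w := by
    rw [bet, htwiny p hp, ← ha, ← hwdef]; ring
  have h1 : w ^ 2 + a ^ 2 + b ^ 2 = 1 := by rw [hw2]; ring
  have hom : omeg τ u p = 1 / w := by
    rw [omeg, hal, hbe]
    rw [show 1 + (b / w) ^ 2 + (-a / w) ^ 2 = (1 / w) ^ 2 by
      field_simp
      linarith [h1]]
    exact Real.sqrt_sq (by positivity)
  have hnuq : ∀ q ∈ Ω, nuF τ u q = omegT v q := by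
    intro q hq
    have hposq : (0:ℝ) < 1 - px v q ^ 2 - py v q ^ 2 := by have := hsp q hq; linarith
    have hwq : 0 < omegT v q := Real.sqrt_pos.mpr hposq
    have hw2q : omegT v q ^ 2 = 1 - px v q ^ 2 - py v q ^ 2 := Real.sq_sqrt hposq.le
    have halq : alph τ u q = py v q / omegT v q := by rw [alph, htwinx q hq]; ring
    have hbeq : bet τ u q = -px v q / omegT v q := by rw [bet, htwiny q hq]; ring
    have homq : omeg τ u q = 1 / omegT v q := by
      rw [omeg, halq, hbeq]
      rw [show 1 + (py v q / omegT v q) ^ 2 + (-px v q / omegT v q) ^ 2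
          = (1 / omegT v q) ^ 2 by
        field_simp
        linarith [hw2q]]
      exact Real.sqrt_sq (by positivity)
    show 1 / omeg τ u q = omegT v q
    rw [homq, one_div_one_div]
  have hnu : nuF τ u p = w := hnuq p hp
  have hnueq : nuF τ u =ᶠ[nhds p] omegT v := by
    filter_upwards [hmem] with q hq; exact hnuq q hq
  have hdnu : fderiv ℝ (nuF τ u) p = fderiv ℝ (omegT v) p := hnueq.fderiv_eq
  have hnx : px (nuF τ u) p = -(a * A + b * B) / w := by
    rw [px, hdnu, hw.fderiv]
    simp only [ContinuousLinearMap.sub_apply, ContinuousLinearMap.add_apply,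
      ContinuousLinearMap.smul_apply, ContinuousLinearMap.comp_apply,
      ContinuousLinearMap.apply_apply, ContinuousLinearMap.zero_apply,
      ContinuousLinearMap.coe_smul', Pi.smul_apply, smul_eq_mul, hsqrt_eq, hsymm]
    simp only [← hA, ← hB, ← hC]
    field_simp
    ring
  have hny : py (nuF τ u) p = -(a * B + b * C) / w := by
    rw [py, hdnu, hw.fderiv]
    simp only [ContinuousLinearMap.sub_apply, ContinuousLinearMap.add_apply,
      ContinuousLinearMap.smul_apply, ContinuousLinearMap.comp_apply,
      ContinuousLinearMap.apply_apply, ContinuousLinearMap.zero_apply,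
      ContinuousLinearMap.coe_smul', Pi.smul_apply, smul_eq_mul, hsqrt_eq, hsymm]
    simp only [← hA, ← hB, ← hC]
    field_simp
    ring
  -- CMC compatibility from symmetry of u's second derivatives
  have hsymmu : px (py u) p = py (px u) p := symm_pd hup
  rw [huyx, huxy] at hsymmu
  have h2 : (A + C) * w ^ 2 + (a * (a * A + b * B) + b * (a * B + b * C))
      = 2 * τ * w ^ 3 := by
    field_simp at hsymmu
    apply mul_left_cancel₀ hwne
    linear_combination -w * hsymmu
  -- final algebra
  rw [gaussKT, gaussK, gradNuSq, hvxx, hvxy, hvyy, huxx, huxy, huyy, hal, hbe, hom, hnu,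
    hnx, hny, ← hwdef]
  rw [← sub_eq_zero]
  have hE : (1)*w^6*τ^2 + (-1)*w^10*τ^2 + (-2)*b^2*w^8*τ^2 + (-1)*b^4*w^6*τ^2 + (2)*a^2*w^8*τ^2 + (-2)*a^2*b^2*w^6*τ^2 + (-1)*a^4*w^6*τ^2 + (2)*C*w^9*τ + (4)*C*b^2*w^7*τ + (2)*C*b^4*w^5*τ + (-2)*C*a^2*w^7*τ + (-1)*C^2*w^8 + (-1)*C^2*b^2*w^4 + (-2)*C^2*b^2*w^6 + (-1)*C^2*b^4*w^2 + (-1)*C^2*b^4*w^4 + (6)*B*a*b*w^7*τ + (4)*B*a*b^3*w^5*τ + (-2)*B*C*a*b*w^4 + (-3)*B*C*a*b*w^6 + (-4)*B*C*a*b^3*w^2 + (-3)*B*C*a*b^3*w^4 + (1)*B^2*w^4 + (-1)*B^2*w^8 + (-1)*B^2*b^2*w^4 + (-1)*B^2*b^2*w^6 + (-1)*B^2*a^2*w^4 + (-1)*B^2*a^2*w^6 + (-4)*B^2*a^2*b^2*w^2 + (-2)*B^2*a^2*b^2*w^4 + (2)*A*a^2*b^2*w^5*τ + (-1)*A*C*w^4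 + (-2)*A*C*a^2*b^2*w^2 + (-1)*A*C*a^2*b^2*w^4 + (-2)*A*B*a*b*w^4 + (-1)*A*B*a*b*w^6 + (-4)*A*B*a^3*b*w^2 + (-1)*A*B*a^3*b*w^4 + (-1)*A^2*a^2*w^4 + (-1)*A^2*a^4*w^2 = 0 := by
    linear_combination ((-1/4)*C^2*w^4 + (-1/4)*C^2*w^6 + (-1/2)*C^2*b^2*w^2 + (1/4)*C^2*b^2*w^4 + (-1/4)*C^2*b^4 + (1/4)*C^2*b^4*w^2 + (-1/4)*C^2*b^6 + (-1/4)*C^2*a^2*w^4 + (-1/2)*C^2*a^2*b^2*w^2 + (-1/4)*C^2*a^2*b^4 + (-1)*B*C*a*b*w^2 + (1)*B*C*a*b*w^4 + (-1)*B*C*a*b^3 + (2)*B*C*a*b^3*w^2 + (-1)*B*C*a*b^5 + (-1)*B*C*a^3*b*w^2 + (-1)*B*C*a^3*b^3 + (-1)*B^2*w^4 + (-1)*B^2*w^6 + (-1)*B^2*a^2*b^2 + (3)*B^2*a^2*b^2*w^2 + (-1)*B^2*a^2*b^4 + (-1)*B^2*a^4*b^2 + (1/2)*A*C*w^4 + (1/2)*A*C*w^6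 + (-1/2)*A*C*b^2*w^2 + (-1/2)*A*C*b^4*w^2 + (-1/2)*A*C*a^2*w^2 + (-1/2)*A*C*a^2*b^2 + (1/2)*A*C*a^2*b^2*w^2 + (-1/2)*A*C*a^2*b^4 + (-1/2)*A*C*a^4*w^2 + (-1/2)*A*C*a^4*b^2 + (-1)*A*B*a*b*w^2 + (1)*A*B*a*b*w^4 + (-1)*A*B*a*b^3*w^2 + (-1)*A*B*a^3*b + (2)*A*B*a^3*b*w^2 + (-1)*A*B*a^3*b^3 + (-1)*A*B*a^5*b + (-1/4)*A^2*w^4 + (-1/4)*A^2*w^6 + (-1/4)*A^2*b^2*w^4 + (-1/2)*A^2*a^2*w^2 + (1/4)*A^2*a^2*w^4 + (-1/2)*A^2*a^2*b^2*w^2 + (-1/4)*A^2*a^4 + (1/4)*A^2*a^4*w^2 + (-1/4)*A^2*a^4*b^2 + (-1/4)*A^2*a^6) * h1 + ((-1/2)*w^3*τ + (1/2)*w^7*τ + (1)*b^2*w^5*τ + (1/2)*b^4*w^3*τ + (-1)*a^2*w^5*τ + (1)*a^2*b^2*w^3*τ + (1/2)*a^4*w^3*τ + (-1/4)*C*w^2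 + (-3/4)*C*w^6 + (-1/4)*C*b^2 + (-5/4)*C*b^2*w^4 + (-1/4)*C*b^4*w^2 + (1/4)*C*b^6 + (1/2)*C*a^2*w^4 + (1/2)*C*a^2*b^4 + (1/4)*C*a^4*w^2 + (1/4)*C*a^4*b^2 + (-1/2)*B*a*b + (-5/2)*B*a*b*w^4 + (-1)*B*a*b^3*w^2 + (1/2)*B*a*b^5 + (-1)*B*a^3*b*w^2 + (1)*B*a^3*b^3 + (1/2)*B*a^5*b + (-1/4)*A*w^2 + (1/4)*A*w^6 + (1/2)*A*b^2*w^4 + (1/4)*A*b^4*w^2 + (-1/4)*A*a^2 + (-1/4)*A*a^2*w^4 + (1/4)*A*a^2*b^4 + (-1/4)*A*a^4*w^2 + (1/2)*A*a^4*b^2 + (1/4)*A*a^6) * h2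
  convert (show ((1)*w^6*τ^2 + (-1)*w^10*τ^2 + (-2)*b^2*w^8*τ^2 + (-1)*b^4*w^6*τ^2 + (2)*a^2*w^8*τ^2 + (-2)*a^2*b^2*w^6*τ^2 + (-1)*a^4*w^6*τ^2 + (2)*C*w^9*τ + (4)*C*b^2*w^7*τ + (2)*C*b^4*w^5*τ + (-2)*C*a^2*w^7*τ + (-1)*C^2*w^8 + (-1)*C^2*b^2*w^4 + (-2)*C^2*b^2*w^6 + (-1)*C^2*b^4*w^2 + (-1)*C^2*b^4*w^4 + (6)*B*a*b*w^7*τ + (4)*B*a*b^3*w^5*τ + (-2)*B*C*a*b*w^4 + (-3)*B*C*a*b*w^6 + (-4)*B*C*a*b^3*w^2 + (-3)*B*C*a*b^3*w^4 + (1)*B^2*w^4 + (-1)*B^2*w^8 + (-1)*B^2*b^2*w^4 + (-1)*B^2*b^2*w^6 + (-1)*B^2*a^2*w^4 + (-1)*B^2*a^2*w^6 + (-4)*B^2*a^2*b^2*w^2 + (-2)*B^2*a^2*b^2*w^4 + (2)*A*a^2*b^2*w^5*τ + (-1)*A*C*w^4 + (-2)*A*C*a^2*b^2*w^2 + (-1)*A*C*a^2*b^2*w^4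 + (-2)*A*B*a*b*w^4 + (-1)*A*B*a*b*w^6 + (-4)*A*B*a^3*b*w^2 + (-1)*A*B*a^3*b*w^4 + (-1)*A^2*a^2*w^4 + (-1)*A^2*a^4*w^2) / w ^ 8 = 0 by rw [hE, zero_div]) using 1
  field_simp
  ring
end
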